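/- (Lemma 4) Suppose X^n ⊂ ℝ^d (d ≥ 2) is in general position. Then there exists u_0 ∈ S^{d−1} such that (s1) u_0 satisfies condition (2.1), and (s2) λ*(X_{u_0}^n) = inf over u ∈ S^{d−1} of λ*(X_u^n); that is, the infimum over all directions of the maximum Tukey depth of the projected sample is attained at a direction satisfying condition (2.1). -/

import Mathlib

/-!
Let `g(u) = perpMaxDepth X u` be the largest depth of a point when only the directions orthogonal
to `u` are used; `A_u` maps `ℝ^{d-1}` isometrically onto `uᗮ`, so `λ*(X_u^n) = g(u)`. Depths lie
in the finite set `{m/n : m ≤ n}`, hence `g` attains its infimum over the sphere at some `u*`.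

`g` is upper semicontinuous: at a point `y` with optimal direction `v ⊥ u`, the projection of `v`
onto `u'ᗮ` works for all `(u', y')` near `(u, y)`, since the strict inequalities
`⟪v, y⟫ < ⟪v, X i⟫` persist; points of positive depth project into a fixed ball, so compactness
makes this uniform in `y`. Thus `g = g(u*)` near `u*`. The normals to hyperplanes through `d`
sample points are finitely many, so directions satisfying (2.1) are dense, and since `g` is
invariant under scaling one of them can be normalized to the required `u₀`.
-/

open scoped RealInnerProductSpace
open MeasureTheory

noncomputable section

/-- `E d` is the Euclidean space `ℝ^d`. -/
abbrev E (d : ℕ) : Type := EuclideanSpace ℝ (Fin d)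

/-- A sample `X` of `n` points in `ℝ^d` is in general position if no affine hyperplane
(encoded as `{x | ⟪v, x⟫ = c}` for some `v ≠ 0`) contains more than `d` of the points. -/
def inGeneralPosition {d n : ℕ} (X : Fin n → E d) : Prop :=
  ∀ v : E d, v ≠ 0 → ∀ c : ℝ, ({i : Fin n | ⟪v, X i⟫ = c} : Set (Fin n)).ncard ≤ d

/-- Number of sample points in the closed halfspace `{z | ⟪u, z⟫ ≤ ⟪u, x⟫}`. -/
def sideCount {d n : ℕ} (X : Fin n → E d) (u x : E d) : ℕ :=
  ({i : Fin n | ⟪u, X i⟫ ≤ ⟪u, x⟫} : Set (Fin n)).ncard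

/-- Tukey's halfspace depth of `x` with respect to the sample `X`. -/
def depth {d n : ℕ} (X : Fin n → E d) (x : E d) : ℝ :=
  sInf {r : ℝ | ∃ u : E d, ‖u‖ = 1 ∧ r = (sideCount X u x : ℝ) / (n : ℝ)}

/-- The maximum Tukey depth `λ*` of the sample `X`. -/
def maxDepth {d n : ℕ} (X : Fin n → E d) : ℝ :=
  sSup (Set.range (depth X))

/-- The set `M(X)` of deepest points. -/
def MSet {d n : ℕ} (X : Fin n → E d) : Set (E d) :=
  {x | depth X x = maxDepth X}

/-- `U_x`: the set of optimal (unit) directions realizing the depth at `x`. -/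
def USet {d n : ℕ} (X : Fin n → E d) (x : E d) : Set (E d) :=
  {u | ‖u‖ = 1 ∧ (sideCount X u x : ℝ) / (n : ℝ) = depth X x}

/-- `H_{x,y}`: the open hemisphere of unit directions `u` with `⟪u, x⟫ < ⟪u, y⟫`. -/
def HSet {d : ℕ} (x y : E d) : Set (E d) :=
  {u | ‖u‖ = 1 ∧ ⟪u, x⟫ < ⟪u, y⟫}

/-- `B_z`. -/
def BSet {d n : ℕ} (X : Fin n → E d) (z : E d) : Set (E d) :=
  {x | x ∈ MSet X ∧ USet X x ∩ HSet x z = ∅}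

/-- `B̃_z = B_z \ {z}`. -/
def BTilde {d n : ℕ} (X : Fin n → E d) (z : E d) : Set (E d) :=
  BSet X z \ {z}

/-- `v` is a unit vector normal to an affine hyperplane spanned by `d` of the sample points. -/
def normalToSampleHyperplane {d n : ℕ} (X : Fin n → E d) (v : E d) : Prop :=
  ‖v‖ = 1 ∧ ∃ (s : Finset (Fin n)) (c : ℝ), s.card = d ∧
    (affineSpan ℝ (X '' (s : Set (Fin n))) : Set (E d)) = {x : E d | ⟪v, x⟫ = c}

/-- Condition (2.1) on a unit direction `u`. -/
def cond21 {d n : ℕ} (X : Fin n → E d) (u : E d) : Prop :=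
  ∀ v : E d, normalToSampleHyperplane X v → ⟪u, v⟫ ≠ 0

/-- `A` represents the columns of a `d × (d-1)` matrix which together with the unit
vector `u` form an orthonormal basis of `ℝ^d`. -/
def IsAu {d : ℕ} (u : E d) (A : Fin (d - 1) → E d) : Prop :=
  ‖u‖ = 1 ∧ Orthonormal ℝ A ∧ ∀ j, ⟪A j, u⟫ = 0

/-- The `A_u`-projection `A_u^T x ∈ ℝ^{d-1}` of a point `x ∈ ℝ^d`. -/
def proj {d : ℕ} (A : Fin (d - 1) → E d) (x : E d) : E (d - 1) :=
  (WithLp.equiv 2 (Fin (d - 1) → ℝ)).symm (fun j => ⟪A j, x⟫)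

/-- The embedding `A_u x = ∑ j x_j A_j ∈ ℝ^d` of a point `x ∈ ℝ^{d-1}`. -/
def embed {d : ℕ} (A : Fin (d - 1) → E d) (x : E (d - 1)) : E d :=
  ∑ j, x j • A j

/-- `λ₀ = inf_{u ∈ S^{d-1}} λ*(X_u^n)`, the infimum over all directions of the maximum
Tukey depth of the projected sample. -/
def lambda0 {d n : ℕ} (X : Fin n → E d) : ℝ :=
  sInf {r : ℝ | ∃ (u : E d) (A : Fin (d - 1) → E d),
    IsAu u A ∧ r = maxDepth (fun i => proj A (X i))}

/-- The average (barycenter) of a set `K ⊆ ℝ^d`, taken with respect to the Hausdorff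
measure of dimension equal to the affine dimension of `K`. -/
def setAverage {d : ℕ} (K : Set (E d)) : E d :=
  (μH[(Module.finrank ℝ (affineSpan ℝ K).direction : ℝ)] K).toReal⁻¹ •
    ∫ x in K, x ∂(μH[(Module.finrank ℝ (affineSpan ℝ K).direction : ℝ)])

/-- Tukey's halfspace median: the average of all deepest points. -/
def TukeyMedian {d n : ℕ} (X : Fin n → E d) : E d :=
  setAverage (MSet X)

/-- `m` contaminating points suffice to break down the Tukey median at `X`. -/
def breaksDown {d n : ℕ} (X : Fin n → E d) (m : ℕ) : Prop :=
  ∀ C : ℝ, ∃ Y : Fin m → E d, C < ‖TukeyMedian (Fin.append X Y) - TukeyMedian X‖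

/-- The finite sample (additional) breakdown point of the Tukey median at `X`. -/
def FSBP {d n : ℕ} (X : Fin n → E d) : ℝ :=
  sInf {r : ℝ | ∃ m : ℕ, 1 ≤ m ∧ breaksDown X m ∧ r = (m : ℝ) / ((n : ℝ) + (m : ℝ))}

open Filter Topology

section InnerProductSpace

variable {F : Type*} [NormedAddCommGroup F] [InnerProductSpace ℝ F]

theorem eq_or_eq_neg_of_setOf_inner_eq {v v' : F} (hv : ‖v‖ = 1) (hv' : ‖v'‖ = 1) {c c' : ℝ}
    (h : {x | ⟪v, x⟫ = c} = {x | ⟪v', x⟫ = c'}) : v' = v ∨ v' = -v := by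
  have hmem : ∀ x, ⟪v, x⟫ = c → ⟪v', x⟫ = c' := fun x hx => (Set.ext_iff.mp h x).mp hx
  have hpar : v' = ⟪v, v'⟫ • v := by
    refine ext_inner_right ℝ fun w => ?_
    have h₁ := hmem (c • v) (by simp [real_inner_smul_right, hv])
    have h₂ := hmem (c • v + (w - ⟪v, w⟫ • v))
      (by simp [inner_add_right, inner_sub_right, real_inner_smul_right, hv])
    simp only [inner_add_right, inner_sub_right, real_inner_smul_right] at h₁ h₂
    rw [real_inner_smul_left, real_inner_comm v']
    linear_combination h₂ - h₁
  have habs : |⟪v, v'⟫| = 1 := by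
    simpa [norm_smul, hv, hv'] using (congrArg norm hpar).symm
  rcases (abs_eq zero_le_one).mp habs with h | h
  · exact .inl (by rw [hpar, h, one_smul])
  · exact .inr (by rw [hpar, h, neg_one_smul])

theorem dense_setOf_forall_inner_ne_zero [CompleteSpace F] {N : Set F} (hN : N.Countable)
    (h0 : 0 ∉ N) : Dense {u : F | ∀ v ∈ N, ⟪u, v⟫ ≠ 0} := by
  have hset : {u : F | ∀ v ∈ N, ⟪u, v⟫ ≠ 0} = ⋂ v ∈ N, ((ℝ ∙ v)ᗮ : Set F)ᶜ := by
    ext u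
    simp [Submodule.mem_orthogonal_singleton_iff_inner_left]
  rw [hset]
  refine dense_biInter_of_isOpen (fun v _ => (Submodule.isClosed_orthogonal _).isOpen_compl) hN
    fun v hv => ?_
  rw [← interior_eq_empty_iff_dense_compl, Set.eq_empty_iff_forall_notMem]
  intro x hx
  have hv_mem : v ∈ (ℝ ∙ v)ᗮ := by
    rw [Submodule.eq_top_of_nonempty_interior' _ ⟨x, hx⟩]
    exact Submodule.mem_top
  rw [Submodule.mem_orthogonal_singleton_iff_inner_left, inner_self_eq_zero] at hv_mem
  exact h0 (hv_mem ▸ hv)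

theorem continuousAt_starProjection_orthogonal_singleton {u : F} (hu : u ≠ 0) (v : F) :
    ContinuousAt (fun u' => (ℝ ∙ u')ᗮ.starProjection v) u := by
  simp_rw [Submodule.starProjection_orthogonal_val, Submodule.starProjection_singleton,
    RCLike.ofReal_real_eq_id, id]
  have : ‖u‖ ^ 2 ≠ 0 := by positivity
  fun_prop (disch := simpa)

end InnerProductSpace

section Projection

variable {d : ℕ} {u : E d} {A : Fin (d - 1) → E d}

theorem proj_apply (A : Fin (d - 1) → E d) (z : E d) (j : Fin (d - 1)) :
    proj A z j = ⟪A j, z⟫ := rfl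

theorem inner_embed_left (A : Fin (d - 1) → E d) (w : E (d - 1)) (z : E d) :
    ⟪embed A w, z⟫ = ⟪w, proj A z⟫ := by
  rw [embed, sum_inner, PiLp.inner_apply]
  refine Finset.sum_congr rfl fun j _ => ?_
  rw [real_inner_smul_left, proj_apply, RCLike.inner_apply', conj_trivial]

theorem proj_embed (hA : Orthonormal ℝ A) (x : E (d - 1)) : proj A (embed A x) = x := by
  ext j
  rw [proj_apply, embed, hA.inner_right_fintype]

theorem norm_embed (hA : Orthonormal ℝ A) (w : E (d - 1)) : ‖embed A w‖ = ‖w‖ := by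
  rw [norm_eq_sqrt_real_inner, inner_embed_left, proj_embed hA, ← norm_eq_sqrt_real_inner]

theorem proj_eq_zero (hA : IsAu u A) : proj A u = 0 := by
  ext j
  rw [proj_apply, hA.2.2 j]
  rfl

theorem finrank_orthogonal_span_singleton_eq (hu : u ≠ 0) :
    Module.finrank ℝ (ℝ ∙ u)ᗮ = d - 1 := by
  have := (ℝ ∙ u).finrank_add_finrank_orthogonal
  rw [finrank_span_singleton hu, finrank_euclideanSpace_fin] at this
  omega

theorem range_embed (hA : IsAu u A) : Set.range (embed A) = {v | ⟪v, u⟫ = 0} := by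
  ext v
  constructor
  · rintro ⟨w, rfl⟩
    rw [Set.mem_ofPred_eq, inner_embed_left, proj_eq_zero hA, inner_zero_right]
  · intro hv
    have hspan : Submodule.span ℝ (Set.range A) = (ℝ ∙ u)ᗮ := by
      apply Submodule.eq_of_le_of_finrank_le
      · rw [Submodule.span_le]
        rintro _ ⟨j, rfl⟩
        exact Submodule.mem_orthogonal_singleton_iff_inner_left.mpr (hA.2.2 j)
      · rw [finrank_orthogonal_span_singleton_eq (norm_ne_zero_iff.mp (hA.1 ▸ one_ne_zero)),
          finrank_span_eq_card hA.2.1.linearIndependent, Fintype.card_fin]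
    have hv_span : v ∈ Submodule.span ℝ (Set.range A) :=
      hspan ▸ Submodule.mem_orthogonal_singleton_iff_inner_left.mpr hv
    obtain ⟨c, hc⟩ := (Submodule.mem_span_range_iff_exists_fun ℝ).mp hv_span
    exact ⟨WithLp.toLp 2 c, hc⟩

theorem exists_isAu (hu : ‖u‖ = 1) : ∃ A : Fin (d - 1) → E d, IsAu u A := by
  let b := (stdOrthonormalBasis ℝ (ℝ ∙ u)ᗮ).reindex
    (finCongr (finrank_orthogonal_span_singleton_eq (norm_ne_zero_iff.mp (hu ▸ one_ne_zero))))
  refine ⟨fun j => b j, hu, ?_, fun j => ?_⟩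
  · exact (Submodule.subtypeₗᵢ _).orthonormal_comp_iff.mpr b.orthonormal
  · exact Submodule.mem_orthogonal_singleton_iff_inner_left.mp (b j).2

end Projection

section PerpDepth

variable {d n : ℕ} (X : Fin n → E d) {u v y : E d}

def perpDepth (u y : E d) : ℝ :=
  sInf ((fun v => (sideCount X v y : ℝ) / n) '' {v | ‖v‖ = 1 ∧ ⟪v, u⟫ = 0})

def perpMaxDepth (u : E d) : ℝ :=
  sSup (Set.range (perpDepth X u))

def depthLevels (n : ℕ) : Set ℝ :=
  (fun m : ℕ => (m : ℝ) / n) '' Set.Iic n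

theorem depthLevels_finite (n : ℕ) : (depthLevels n).Finite :=
  (Set.finite_Iic n).image _

theorem sideCount_le (v y : E d) : sideCount X v y ≤ n := by
  unfold sideCount
  simpa using Set.ncard_le_card {i | ⟪v, X i⟫ ≤ ⟪v, y⟫}

theorem sideCount_mono {w z : E d} (h : ∀ i, ⟪w, X i⟫ ≤ ⟪w, z⟫ → ⟪v, X i⟫ ≤ ⟪v, y⟫) :
    sideCount X w z ≤ sideCount X v y :=
  Set.ncard_le_ncard h (Set.toFinite _)

theorem sideCount_smul {c : ℝ} (hc : 0 < c) : sideCount X (c • v) y = sideCount X v y := by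
  simp only [sideCount, real_inner_smul_left, mul_le_mul_iff_right₀ hc]

theorem perpDepth_congr {z : E d} (h : ∀ v, ⟪v, u⟫ = 0 → ⟪v, y⟫ = ⟪v, z⟫) :
    perpDepth X u y = perpDepth X u z := by
  unfold perpDepth sideCount
  congr 1
  exact Set.image_congr fun v hv => by simp only [h v hv.2]

theorem perpDepth_smul {c : ℝ} (hc : c ≠ 0) : perpDepth X (c • u) = perpDepth X u := by
  ext y
  simp [perpDepth, real_inner_smul_right, hc]

theorem perpDepth_nonneg : 0 ≤ perpDepth X u y :=
  Real.sInf_nonneg <| Set.forall_mem_image.mpr fun _ _ => by positivity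

theorem perpDepth_le (hv : v ≠ 0) (hvu : ⟪v, u⟫ = 0) :
    perpDepth X u y ≤ sideCount X v y / n := by
  have hv' : 0 < ‖v‖⁻¹ := by positivity
  refine csInf_le ⟨0, Set.forall_mem_image.mpr fun _ _ => by positivity⟩
    ⟨‖v‖⁻¹ • v, ⟨norm_smul_inv_norm hv, ?_⟩, by simp only [sideCount_smul X hv']⟩
  rw [real_inner_smul_left, hvu, mul_zero]

theorem exists_perpDepth_eq (hd : 2 ≤ d) (hu : ‖u‖ = 1) (y : E d) :
    ∃ v, ‖v‖ = 1 ∧ ⟪v, u⟫ = 0 ∧ (sideCount X v y : ℝ) / n = perpDepth X u y := by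
  obtain ⟨A, hA⟩ := exists_isAu hu
  have hne : {v : E d | ‖v‖ = 1 ∧ ⟪v, u⟫ = 0}.Nonempty :=
    ⟨A ⟨0, by omega⟩, hA.2.1.1 _, hA.2.2 _⟩
  have hfin : ((fun v => (sideCount X v y : ℝ) / n) '' {v | ‖v‖ = 1 ∧ ⟪v, u⟫ = 0}).Finite :=
    (depthLevels_finite n).subset <| Set.image_subset_iff.mpr fun v _ => ⟨_, sideCount_le X v y, rfl⟩
  obtain ⟨v, ⟨hv, hvu⟩, heq⟩ := (hne.image _).csInf_mem hfin
  exact ⟨v, hv, hvu, heq⟩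

theorem perpDepth_mem_depthLevels (hd : 2 ≤ d) (hu : ‖u‖ = 1) (y : E d) :
    perpDepth X u y ∈ depthLevels n := by
  obtain ⟨v, -, -, heq⟩ := exists_perpDepth_eq X hd hu y
  exact heq ▸ ⟨_, sideCount_le X v y, rfl⟩

theorem perpMaxDepth_mem_depthLevels (hd : 2 ≤ d) (hu : ‖u‖ = 1) :
    perpMaxDepth X u ∈ depthLevels n :=
  have hsub : Set.range (perpDepth X u) ⊆ depthLevels n :=
    Set.range_subset_iff.mpr (perpDepth_mem_depthLevels X hd hu)
  hsub <| (Set.range_nonempty _).csSup_mem ((depthLevels_finite n).subset hsub)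

theorem perpDepth_le_perpMaxDepth (hd : 2 ≤ d) (hu : ‖u‖ = 1) (y : E d) :
    perpDepth X u y ≤ perpMaxDepth X u :=
  le_csSup ((depthLevels_finite n).subset
    (Set.range_subset_iff.mpr (perpDepth_mem_depthLevels X hd hu))).bddAbove ⟨y, rfl⟩

end PerpDepth

section Transfer

variable {d n : ℕ} (X : Fin n → E d) {u : E d} {A : Fin (d - 1) → E d}

theorem sideCount_proj (hA : Orthonormal ℝ A) (w x : E (d - 1)) :
    sideCount (fun i => proj A (X i)) w x = sideCount X (embed A w) (embed A x) := by
  simp only [sideCount, inner_embed_left, proj_embed hA]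

theorem depth_proj (hA : IsAu u A) (x : E (d - 1)) :
    depth (fun i => proj A (X i)) x = perpDepth X u (embed A x) := by
  unfold depth perpDepth
  congr 1
  ext r
  simp only [Set.mem_image, Set.mem_ofPred_eq, sideCount_proj X hA.2.1]
  constructor
  · rintro ⟨w, hw, rfl⟩
    exact ⟨embed A w, ⟨by rwa [norm_embed hA.2.1], (range_embed hA).subset ⟨w, rfl⟩⟩, rfl⟩
  · rintro ⟨v, ⟨hv, hvu⟩, rfl⟩
    obtain ⟨w, rfl⟩ := (range_embed hA).superset hvu
    exact ⟨w, by rwa [← norm_embed hA.2.1], rfl⟩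

theorem maxDepth_proj (hA : IsAu u A) :
    maxDepth (fun i => proj A (X i)) = perpMaxDepth X u := by
  have hembed : ∀ y, perpDepth X u (embed A (proj A y)) = perpDepth X u y := by
    refine fun y => perpDepth_congr X fun v hv => ?_
    obtain ⟨w, rfl⟩ := (range_embed hA).superset hv
    rw [inner_embed_left, inner_embed_left, proj_embed hA.2.1]
  unfold maxDepth perpMaxDepth
  congr 1
  ext r
  constructor
  · rintro ⟨x, rfl⟩
    exact ⟨embed A x, (depth_proj X hA x).symm⟩
  · rintro ⟨y, rfl⟩
    exact ⟨proj A y, by rw [depth_proj X hA, hembed]⟩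

theorem lambda0_eq_sInf : lambda0 X = sInf (perpMaxDepth X '' Metric.sphere 0 1) := by
  unfold lambda0
  congr 1
  ext r
  simp only [Set.mem_image, mem_sphere_zero_iff_norm, Set.mem_ofPred_eq]
  constructor
  · rintro ⟨u, A, hA, rfl⟩
    exact ⟨u, hA.1, (maxDepth_proj X hA).symm⟩
  · rintro ⟨u, hu, rfl⟩
    obtain ⟨A, hA⟩ := exists_isAu hu
    exact ⟨u, A, hA, (maxDepth_proj X hA).symm⟩

theorem finite_perpMaxDepth_image (hd : 2 ≤ d) :
    (perpMaxDepth X '' Metric.sphere 0 1).Finite :=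
  (depthLevels_finite n).subset <| Set.image_subset_iff.mpr fun _ hu =>
    perpMaxDepth_mem_depthLevels X hd (mem_sphere_zero_iff_norm.mp hu)

theorem lambda0_le_perpMaxDepth (hd : 2 ≤ d) (hu : ‖u‖ = 1) : lambda0 X ≤ perpMaxDepth X u :=
  lambda0_eq_sInf X ▸ csInf_le (finite_perpMaxDepth_image X hd).bddBelow
    ⟨u, mem_sphere_zero_iff_norm.mpr hu, rfl⟩

theorem exists_perpMaxDepth_eq_lambda0 (hd : 2 ≤ d) :
    ∃ u : E d, ‖u‖ = 1 ∧ perpMaxDepth X u = lambda0 X := by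
  have hne : (Metric.sphere (0 : E d) 1).Nonempty :=
    ⟨EuclideanSpace.single ⟨0, by omega⟩ 1, by simp⟩
  obtain ⟨u, hu, heq⟩ := (hne.image _).csInf_mem (finite_perpMaxDepth_image X hd)
  exact ⟨u, mem_sphere_zero_iff_norm.mp hu, heq.trans (lambda0_eq_sInf X).symm⟩

end Transfer

section Semicontinuity

variable {d n : ℕ} (X : Fin n → E d) {u : E d}

theorem exists_mem_closedBall_perpDepth_le {R : ℝ} (hR : ∀ i, ‖X i‖ ≤ R) (hR0 : 0 ≤ R)
    (u y : E d) : ∃ z ∈ Metric.closedBall 0 R, perpDepth X u y ≤ perpDepth X u z := by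
  let z := (ℝ ∙ u)ᗮ.starProjection y
  have hzu : ⟪z, u⟫ = 0 :=
    Submodule.mem_orthogonal_singleton_iff_inner_left.mp (Submodule.starProjection_apply_mem _ y)
  have hyz : perpDepth X u y = perpDepth X u z := perpDepth_congr X fun v hv => by
    rw [← Submodule.inner_starProjection_left_eq_right, Submodule.starProjection_eq_self_iff.mpr
      (Submodule.mem_orthogonal_singleton_iff_inner_left.mpr hv)]
  by_cases hz : ‖z‖ ≤ R
  · exact ⟨z, mem_closedBall_zero_iff.mpr hz, hyz.le⟩
  refine ⟨0, mem_closedBall_zero_iff.mpr (by simpa using hR0), ?_⟩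
  -- far from the sample, the halfspace facing away from the origin contains no point
  have hempty : sideCount X (-z) z = 0 := by
    refine (Set.ncard_eq_zero (Set.toFinite _)).mpr (Set.eq_empty_of_forall_notMem fun i hi => ?_)
    have hi' : ‖z‖ ^ 2 ≤ ⟪z, X i⟫ := by
      simpa [inner_neg_left, real_inner_self_eq_norm_sq] using hi
    nlinarith [real_inner_le_norm z (X i), hR i, norm_nonneg z]
  calc perpDepth X u y = perpDepth X u z := hyz
    _ ≤ sideCount X (-z) z / n :=
      perpDepth_le X (neg_ne_zero.mpr fun h => hz (by simpa [h] using hR0))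
        (by rw [inner_neg_left, hzu, neg_zero])
    _ = 0 := by simp [hempty]
    _ ≤ perpDepth X u 0 := perpDepth_nonneg X

theorem eventually_perpDepth_le (hd : 2 ≤ d) (hu : ‖u‖ = 1) (y : E d) :
    ∀ᶠ p : E d × E d in 𝓝 (u, y), perpDepth X p.1 p.2 ≤ perpDepth X u y := by
  obtain ⟨v, hv, hvu, hveq⟩ := exists_perpDepth_eq X hd hu y
  -- the optimal direction `v` at `u` is followed by its projection onto `p.1ᗮ`
  let V : E d → E d := fun u' => (ℝ ∙ u')ᗮ.starProjection v
  have hVu : V u = v := Submodule.starProjection_eq_self_iff.mpr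
    (Submodule.mem_orthogonal_singleton_iff_inner_left.mpr hvu)
  have hV : Tendsto (fun p : E d × E d => V p.1) (𝓝 (u, y)) (𝓝 v) := hVu ▸
    ((continuousAt_starProjection_orthogonal_singleton
      (norm_ne_zero_iff.mp (hu ▸ one_ne_zero)) v).tendsto.comp continuousAt_fst)
  have hsub : ∀ᶠ p : E d × E d in 𝓝 (u, y),
      ∀ i, ⟪V p.1, X i⟫ ≤ ⟪V p.1, p.2⟫ → ⟪v, X i⟫ ≤ ⟪v, y⟫ := by
    refine eventually_all.mpr fun i => ?_
    by_cases hi : ⟪v, X i⟫ ≤ ⟪v, y⟫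
    · exact .of_forall fun _ _ => hi
    have hlim : Tendsto (fun p : E d × E d => ⟪V p.1, X i⟫ - ⟪V p.1, p.2⟫) (𝓝 (u, y))
        (𝓝 (⟪v, X i⟫ - ⟪v, y⟫)) :=
      (hV.inner tendsto_const_nhds).sub (hV.inner continuousAt_snd)
    filter_upwards [hlim.eventually (lt_mem_nhds (sub_pos.mpr (not_le.mp hi)))] with p hp hle
    linarith
  filter_upwards [hV.eventually_ne (norm_ne_zero_iff.mp (hv ▸ one_ne_zero)), hsub]
    with p hp hpi
  calc perpDepth X p.1 p.2 ≤ sideCount X (V p.1) p.2 / n :=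
        perpDepth_le X hp (Submodule.mem_orthogonal_singleton_iff_inner_left.mp
          (Submodule.starProjection_apply_mem _ v))
    _ ≤ sideCount X v y / n := by gcongr; exact sideCount_mono X hpi
    _ = perpDepth X u y := hveq

theorem eventually_perpMaxDepth_le (hd : 2 ≤ d) (hu : ‖u‖ = 1) :
    ∀ᶠ u' in 𝓝 u, perpMaxDepth X u' ≤ perpMaxDepth X u := by
  let R := ∑ i, ‖X i‖
  have hR : ∀ i, ‖X i‖ ≤ R := fun i =>
    Finset.single_le_sum (f := fun j => ‖X j‖) (fun _ _ => norm_nonneg _) (Finset.mem_univ i)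
  have hball : ∀ᶠ u' in 𝓝 u, ∀ y ∈ Metric.closedBall (0 : E d) R,
      perpDepth X u' y ≤ perpMaxDepth X u :=
    (isCompact_closedBall 0 R).eventually_forall_of_forall_eventually fun y _ =>
      (eventually_perpDepth_le X hd hu y).mono fun p hp =>
        hp.trans (perpDepth_le_perpMaxDepth X hd hu y)
  filter_upwards [hball] with u' hu'
  refine csSup_le (Set.range_nonempty _) (Set.forall_mem_range.mpr fun y => ?_)
  obtain ⟨z, hz, hyz⟩ := exists_mem_closedBall_perpDepth_le X hR
    (Finset.sum_nonneg fun _ _ => norm_nonneg _) u' y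
  exact hyz.trans (hu' z hz)

end Semicontinuity

theorem finite_setOf_normalToSampleHyperplane {d n : ℕ} (X : Fin n → E d) :
    {v | normalToSampleHyperplane X v}.Finite := by
  let normals (s : Finset (Fin n)) : Set (E d) := {v | ‖v‖ = 1 ∧ ∃ c : ℝ,
    (affineSpan ℝ (X '' (s : Set (Fin n))) : Set (E d)) = {x | ⟪v, x⟫ = c}}
  have hfin : ∀ s, (normals s).Finite := fun s => by
    rcases (normals s).eq_empty_or_nonempty with h | ⟨v₀, hv₀, c₀, hc₀⟩
    · exact h ▸ Set.finite_empty
    refine (Set.toFinite {v₀, -v₀}).subset ?_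
    rintro v ⟨hv, c, hc⟩
    exact eq_or_eq_neg_of_setOf_inner_eq hv₀ hv (hc₀.symm.trans hc)
  refine (Set.finite_iUnion hfin).subset ?_
  rintro v ⟨hv, s, c, -, hc⟩
  exact Set.mem_iUnion.mpr ⟨s, hv, c, hc⟩

theorem dense_setOf_cond21 {d n : ℕ} (X : Fin n → E d) : Dense {u | cond21 X u} :=
  dense_setOf_forall_inner_ne_zero (finite_setOf_normalToSampleHyperplane X).countable
    fun h => by simpa using h.1

theorem lemma4_general {d n : ℕ} (hd : 2 ≤ d) (X : Fin n → E d) :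
    ∃ (u₀ : E d) (A₀ : Fin (d - 1) → E d), IsAu u₀ A₀ ∧ cond21 X u₀ ∧
      maxDepth (fun i => proj A₀ (X i)) = lambda0 X := by
  obtain ⟨u, hu, hmin⟩ := exists_perpMaxDepth_eq_lambda0 X hd
  obtain ⟨w, hw, hwle, hw0⟩ := (dense_setOf_cond21 X).inter_nhds_nonempty
    ((eventually_perpMaxDepth_le X hd hu).and
      (eventually_ne_nhds (norm_ne_zero_iff.mp (hu ▸ one_ne_zero))))
  have hc : ‖w‖⁻¹ ≠ 0 := inv_ne_zero (norm_ne_zero_iff.mpr hw0)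
  obtain ⟨A₀, hA₀⟩ := exists_isAu (norm_smul_inv_norm (𝕜 := ℝ) hw0)
  refine ⟨‖w‖⁻¹ • w, A₀, hA₀, fun v hv => ?_, ?_⟩
  · rw [real_inner_smul_left]
    exact mul_ne_zero hc (hw v hv)
  · rw [maxDepth_proj X hA₀]
    refine le_antisymm ?_ (lambda0_le_perpMaxDepth X hd hA₀.1)
    calc perpMaxDepth X (‖w‖⁻¹ • w) = perpMaxDepth X w := by
          simp only [perpMaxDepth, perpDepth_smul X hc]
      _ ≤ lambda0 X := hmin ▸ hwle

/-- **Lemma 4.** There is a unit vector `u₀` satisfying condition (2.1) at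
which the infimum over all directions of the maximum Tukey depth of the projected sample is
attained: `λ*(X_{u₀}^n) = inf_{u ∈ S^{d-1}} λ*(X_u^n)`. -/
theorem lemma4 {d n : ℕ} (hd : 2 ≤ d) (X : Fin n → E d)
    (hX : inGeneralPosition X) :
    ∃ (u₀ : E d) (A₀ : Fin (d - 1) → E d), IsAu u₀ A₀ ∧ cond21 X u₀ ∧
      maxDepth (fun i => proj A₀ (X i)) = lambda0 X :=
  lemma4_general hd X
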